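/- If s ∈ S(G,O) satisfies α(s) = 1 (the identity of G), then s commutes with every element of S(G,O); in particular, the subsemigroup S(G,O)_1 = α^{-1}(1) is contained in the center of S(G,O) and is commutative. -/

import Mathlib

/-- The defining relations of the factorization semigroup `S(G,O)`:
`x_{g₁} ⬝ x_{g₂} = x_{g₂} ⬝ x_{g₂⁻¹ g₁ g₂}`. -/
inductive FactRel (G : Type) [Group G] (O : Set G) :
    FreeSemigroup {g : G // g ∈ O} → FreeSemigroup {g : G // g ∈ O} → Prop
  | rel (g₁ g₂ : {g : G // g ∈ O}) (h : (g₂ : G)⁻¹ * g₁ * g₂ ∈ O) :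
      FactRel G O (FreeSemigroup.of g₁ * FreeSemigroup.of g₂)
        (FreeSemigroup.of g₂ * FreeSemigroup.of ⟨(g₂ : G)⁻¹ * g₁ * g₂, h⟩)

/-- The factorization semigroup `S(G,O)`. -/
def FactS (G : Type) [Group G] (O : Set G) :=
  (conGen (FactRel G O)).Quotient

instance (G : Type) [Group G] (O : Set G) : Semigroup (FactS G O) :=
  Con.semigroup _

/-- The generator `x_g` of `S(G,O)`. -/
def xg {G : Type} [Group G] {O : Set G} (g : {g : G // g ∈ O}) : FactS G O :=
  (conGen (FactRel G O)).toQuotient (FreeSemigroup.of g)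

/-!
Moving a generator `x_g` to the right past any `s ∈ S(G,O)` replaces it by
`x_{α(s)⁻¹ g α(s)}` (induction on a word for `s`, using one defining relation per letter).
If `α(s) = 1` this says that `s` commutes with every generator, hence with everything.
-/

namespace FactS

variable {G : Type} [Group G] {O : Set G}

theorem induction_on {p : FactS G O → Prop} (s : FactS G O) (of : ∀ g, p (xg g))
    (mul : ∀ s t, p s → p t → p (s * t)) : p s := by
  induction s using Con.induction_on with
  | H w =>
    induction w using FreeSemigroup.recOnMul with
    | ih1 g => exact of g
    | ih2 g w _ ih => exact mul _ _ (of g) ih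

theorem xg_mul_xg (g₁ g₂ : {g : G // g ∈ O}) (h : (g₂ : G)⁻¹ * g₁ * g₂ ∈ O) :
    xg g₁ * xg g₂ = xg g₂ * xg ⟨(g₂ : G)⁻¹ * g₁ * g₂, h⟩ :=
  (Con.eq _).2 <| ConGen.Rel.of _ _ (FactRel.rel g₁ g₂ h)

def conjGen (hO : ∀ g ∈ O, ∀ h : G, h⁻¹ * g * h ∈ O) (g : {g : G // g ∈ O}) (h : G) :
    {g : G // g ∈ O} :=
  ⟨h⁻¹ * g * h, hO g g.2 h⟩

theorem conjGen_one (hO : ∀ g ∈ O, ∀ h : G, h⁻¹ * g * h ∈ O) (g : {g : G // g ∈ O}) :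
    conjGen hO g 1 = g :=
  Subtype.ext (by simp [conjGen])

theorem conjGen_conjGen (hO : ∀ g ∈ O, ∀ h : G, h⁻¹ * g * h ∈ O) (g : {g : G // g ∈ O})
    (a b : G) :
    conjGen hO (conjGen hO g a) b = conjGen hO g (a * b) :=
  Subtype.ext (by simp only [conjGen]; group)

theorem xg_mul_eq_mul_xg_conjGen (hO : ∀ g ∈ O, ∀ h : G, h⁻¹ * g * h ∈ O)
    (α : FactS G O →ₙ* G) (hα : ∀ g : {g : G // g ∈ O}, α (xg g) = (g : G))
    (s : FactS G O) : ∀ g, xg g * s = s * xg (conjGen hO g (α s)) := by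
  induction s using induction_on with
  | of a =>
    intro g
    rw [hα]
    exact xg_mul_xg g a _
  | mul s t hs ht =>
    intro g
    rw [← mul_assoc, hs, mul_assoc, ht, ← mul_assoc, conjGen_conjGen, map_mul]

theorem commute_of_map_eq_one (hO : ∀ g ∈ O, ∀ h : G, h⁻¹ * g * h ∈ O)
    (α : FactS G O →ₙ* G) (hα : ∀ g : {g : G // g ∈ O}, α (xg g) = (g : G))
    {s : FactS G O} (hs : α s = 1)
    (t : FactS G O) : Commute s t := by
  induction t using induction_on with
  | of g =>
    have h := xg_mul_eq_mul_xg_conjGen hO α hα s g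
    rw [hs, conjGen_one] at h
    exact h.symm
  | mul t u ht hu => exact ht.mul_right hu

end FactS

theorem stmt8_general (G : Type) [Group G] (O : Set G)
    (hO : ∀ g ∈ O, ∀ h : G, h⁻¹ * g * h ∈ O)
    (α : FactS G O →ₙ* G) (hα : ∀ g : {g : G // g ∈ O}, α (xg g) = (g : G)) :
    ∀ s : FactS G O, α s = 1 → ∀ t : FactS G O, s * t = t * s :=
  fun _ hs t => FactS.commute_of_map_eq_one hO α hα hs t

theorem stmt8 (G : Type) [Group G] (O : Set G) (h1 : (1 : G) ∉ O)
    (hO : ∀ g ∈ O, ∀ h : G, h⁻¹ * g * h ∈ O)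
    (α : FactS G O →ₙ* G) (hα : ∀ g : {g : G // g ∈ O}, α (xg g) = (g : G)) :
    ∀ s : FactS G O, α s = 1 → ∀ t : FactS G O, s * t = t * s :=
  stmt8_general G O hO α hα
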